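/- arXiv:1502.00352 — 3 statements merged into one kernel-verified Lean document; each statement's English description precedes it below -/
import Mathlib

section
/- Let X₁, …, X_n be independent random vectors in ℝ^p (p ≥ 2) with nonnegative coordinates X_{ij} ≥ 0. Let Z = max_{1≤j≤p} ∑_{i=1}^n X_{ij} and M = max_{1≤i≤n} max_{1≤j≤p} X_{ij}. Then E[Z] ≤ K·(max_{1≤j≤p} E[∑_{i=1}^n X_{ij}] + E[M]·log p) for some absolute constant K. -/
/-!
Truncate at a level `τ ≥ 4 𝔼M`. The truncated column sums `∑ᵢ min(Xᵢⱼ, τ)` have independent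
summands in `[0, τ]`; bounding their maximum by `τ log ∑ⱼ exp(Sⱼ / τ)`, then Jensen and
`𝔼 e^U ≤ e^{(e - 1) 𝔼U}` for `U ∈ [0, 1]`, gives `τ log p + (e - 1) maxⱼ 𝔼 ∑ᵢ Xᵢⱼ`.
The truncation loses at most `∑ᵢ Mᵢ 1{Mᵢ > τ}` with `Mᵢ = maxⱼ Xᵢⱼ`. For independent `Mᵢ`,
`min(1, ∑ᵢ P(Mᵢ > t)) ≤ 2 P(M > t)`; by Markov this forces `∑ᵢ P(Mᵢ > τ) ≤ 1`, and integrating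
the tails gives `𝔼 ∑ᵢ Mᵢ 1{Mᵢ > τ} ≤ τ + 2 𝔼M`.
-/

open MeasureTheory ProbabilityTheory Real Set Finset

lemma Real.exp_le_one_add_exp_one_sub_one_mul {x : ℝ} (h0 : 0 ≤ x) (h1 : x ≤ 1) :
    exp x ≤ 1 + (exp 1 - 1) * x := by
  have := convexOn_exp.2 (mem_univ 0) (mem_univ 1) (sub_nonneg.2 h1) h0 (sub_add_cancel 1 x)
  simp only [smul_eq_mul, mul_zero, mul_one, zero_add, exp_zero] at this
  linarith

lemma Real.iSup_le_mul_log_sum_exp {κ : Type*} [Fintype κ] [Nonempty κ] (a : κ → ℝ) {τ : ℝ}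
    (hτ : 0 < τ) : ⨆ j, a j ≤ τ * log (∑ j, exp (a j / τ)) := by
  refine ciSup_le fun j => ?_
  have hle : exp (a j / τ) ≤ ∑ j, exp (a j / τ) :=
    single_le_sum (f := fun j => exp (a j / τ)) (fun j _ => (exp_pos _).le) (mem_univ j)
  calc a j = τ * log (exp (a j / τ)) := by rw [log_exp]; field_simp
    _ ≤ τ * log (∑ j, exp (a j / τ)) := by gcongr

lemma Real.le_min_add_ite {x m τ : ℝ} (hx : 0 ≤ x) (hxm : x ≤ m) (hτ : 0 ≤ τ) :
    x ≤ min x τ + if τ < m then m else 0 := by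
  split_ifs with h
  · linarith [le_min hx hτ]
  · rw [min_eq_left (hxm.trans (not_lt.1 h))]; linarith

variable {ι : Type*} [Fintype ι]

lemma Real.sum_div_le_card {y : ι → ℝ} {τ : ℝ} (hτ : 0 < τ) (hy : ∀ i, y i ≤ τ) :
    (∑ i, y i) / τ ≤ Fintype.card ι := by
  rw [div_le_iff₀ hτ]
  calc ∑ i, y i ≤ ∑ _i : ι, τ := sum_le_sum fun i _ => hy i
    _ = Fintype.card ι * τ := by simp

lemma Real.min_one_sum_le_two_mul_one_sub_prod {r : ι → ℝ} (h0 : ∀ i, 0 ≤ r i)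
    (h1 : ∀ i, r i ≤ 1) : min 1 (∑ i, r i) ≤ 2 * (1 - ∏ i, (1 - r i)) := by
  set s := ∑ i, r i
  have hs0 : 0 ≤ s := sum_nonneg fun i _ => h0 i
  have hprod : ∏ i, (1 - r i) ≤ exp (-s) := by
    rw [← sum_neg_distrib, exp_sum]
    exact prod_le_prod (fun i _ => sub_nonneg.2 (h1 i)) fun i _ => by
      linarith [add_one_le_exp (-r i)]
  -- `e^{-s} ≤ 1 - s/2` on `[0, 1]` by convexity, and `e^{-s} ≤ e^{-1} ≤ 1/2` beyond.
  rcases le_total s 1 with hs | hs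
  · have hconv := convexOn_exp.2 (mem_univ 0) (mem_univ (-1)) (sub_nonneg.2 hs) hs0
      (sub_add_cancel 1 s)
    simp only [smul_eq_mul, mul_zero, mul_neg, mul_one, zero_add, exp_zero] at hconv
    have := mul_le_mul_of_nonneg_left exp_neg_one_lt_half.le hs0
    rw [min_eq_right hs]
    linarith
  · have : exp (-s) ≤ exp (-1) := exp_le_exp.2 (neg_le_neg hs)
    rw [min_eq_left hs]
    linarith [exp_neg_one_lt_half]

lemma ENNReal.min_one_sum_le_two_mul_one_sub_prod {a : ι → ENNReal} (ha : ∀ i, a i ≤ 1) :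
    min 1 (∑ i, a i) ≤ 2 * (1 - ∏ i, (1 - a i)) := by
  have hfin : ∀ i, a i ≠ ⊤ := fun i => ne_top_of_le_ne_top one_ne_top (ha i)
  rw [← ENNReal.toReal_le_toReal (min_le_left _ _ |>.trans_lt one_lt_top).ne
      (mul_ne_top ofNat_ne_top (tsub_le_self.trans_lt one_lt_top).ne),
    ENNReal.toReal_min one_ne_top (ENNReal.sum_ne_top.2 fun i _ => hfin i), ENNReal.toReal_mul,
    ENNReal.toReal_sub_of_le (prod_le_one' fun i _ => tsub_le_self) one_ne_top,
    ENNReal.toReal_prod, ENNReal.toReal_sum fun i _ => hfin i]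
  simp only [ENNReal.toReal_one, ENNReal.toReal_ofNat]
  simp_rw [ENNReal.toReal_sub_of_le (ha _) one_ne_top, ENNReal.toReal_one]
  exact Real.min_one_sum_le_two_mul_one_sub_prod (fun i => ENNReal.toReal_nonneg)
    fun i => ENNReal.toReal_le_of_le_ofReal zero_le_one (by simpa using ha i)

lemma Antitone.setLIntegral_comp_max_le {G : ℝ → ENNReal} (hG : Antitone G) {τ : ℝ}
    (hτ : 0 ≤ τ) (hGτ : G τ ≤ 1) :
    ∫⁻ t in Ioi 0, G (max τ t) ≤ ENNReal.ofReal τ + ∫⁻ t in Ioi 0, min 1 (G t) := by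
  conv_lhs =>
    rw [← Ioc_union_Ioi_eq_Ioi hτ, lintegral_union measurableSet_Ioi Ioc_disjoint_Ioi_same]
  refine add_le_add ?_ ?_
  · calc ∫⁻ t in Ioc 0 τ, G (max τ t) ≤ ∫⁻ _ in Ioc 0 τ, 1 :=
          setLIntegral_mono' measurableSet_Ioc fun t ht => by rwa [max_eq_left ht.2]
      _ = ENNReal.ofReal τ := by rw [setLIntegral_one, volume_Ioc, sub_zero]
  · calc ∫⁻ t in Ioi τ, G (max τ t) = ∫⁻ t in Ioi τ, min 1 (G t) :=
          setLIntegral_congr_fun measurableSet_Ioi fun t ht => by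
            rw [max_eq_right (le_of_lt ht), min_eq_right ((hG (le_of_lt ht)).trans hGτ)]
      _ ≤ ∫⁻ t in Ioi 0, min 1 (G t) := lintegral_mono_set (Ioi_subset_Ioi hτ)

variable {Ω : Type*} [MeasurableSpace Ω] {μ : Measure Ω}

lemma lintegral_sum_indicator_lt_eq {M : ι → Ω → ℝ} (hM : ∀ i, Measurable (M i)) {τ : ℝ}
    (hτ : 0 ≤ τ) :
    ∫⁻ ω, ENNReal.ofReal (∑ i, {ω | τ < M i ω}.indicator (M i) ω) ∂μ
      = ∫⁻ t in Ioi 0, ∑ i, μ {ω | max τ t < M i ω} := by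
  have hnn : ∀ i ω, 0 ≤ {ω | τ < M i ω}.indicator (M i) ω := fun i ω =>
    indicator_nonneg (fun ω (h : τ < M i ω) => hτ.trans h.le) ω
  have hmeas : ∀ i, Measurable ({ω | τ < M i ω}.indicator (M i)) :=
    fun i => (hM i).indicator (hM i measurableSet_Ioi)
  have hanti : ∀ i, Antitone fun t => μ {ω | max τ t < M i ω} := fun i s t hst =>
    measure_mono fun ω h => (max_le_max le_rfl hst).trans_lt h
  rw [lintegral_finsetSum' _ fun i _ => (hanti i).measurable.aemeasurable]
  simp_rw [ENNReal.ofReal_sum_of_nonneg fun i _ => hnn i _]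
  rw [lintegral_finsetSum _ fun i _ => (hmeas i).ennreal_ofReal]
  refine sum_congr rfl fun i _ => ?_
  rw [lintegral_eq_lintegral_meas_lt μ (ae_of_all _ (hnn i)) (hmeas i).aemeasurable]
  refine setLIntegral_congr_fun measurableSet_Ioi fun t (ht : 0 < t) => congrArg μ ?_
  ext ω
  by_cases h : τ < M i ω <;> simp [h, ht.not_gt]

variable [IsProbabilityMeasure μ]

lemma integral_log_le_log_integral {W : Ω → ℝ} {c : ℝ} (hc : 0 < c) (hW : ∀ᵐ ω ∂μ, c ≤ W ω)
    (hWi : Integrable W μ) (hlogW : Integrable (fun ω => log (W ω)) μ) :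
    ∫ ω, log (W ω) ∂μ ≤ log (∫ ω, W ω ∂μ) :=
  (strictConcaveOn_log_Ioi.concaveOn.subset (Ici_subset_Ioi.2 hc) (convex_Ici c)).le_map_integral
    (continuousOn_log.mono fun _ hx => (hc.trans_le hx).ne') isClosed_Ici hW hWi hlogW

namespace ProbabilityTheory

lemma iIndepFun.min_one_sum_measure_lt_le {M : ι → Ω → ℝ} (hM : iIndepFun M μ)
    (hMm : ∀ i, Measurable (M i)) {N : Ω → ℝ} (hMN : ∀ i ω, M i ω ≤ N ω) (t : ℝ) :
    min 1 (∑ i, μ {ω | t < M i ω}) ≤ 2 * μ {ω | t < N ω} := by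
  have hA : ∀ i, MeasurableSet {ω | t < M i ω} := fun i => hMm i measurableSet_Ioi
  have hcompl : μ (⋃ i, {ω | t < M i ω})ᶜ = ∏ i, (1 - μ {ω | t < M i ω}) := by
    rw [compl_iUnion, hM.meas_iInter fun i => ⟨Iic t, measurableSet_Iic, by ext; simp⟩]
    exact prod_congr rfl fun i _ => prob_compl_eq_one_sub (hA i)
  calc min 1 (∑ i, μ {ω | t < M i ω}) ≤ 2 * (1 - ∏ i, (1 - μ {ω | t < M i ω})) :=
        ENNReal.min_one_sum_le_two_mul_one_sub_prod fun i => prob_le_one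
    _ = 2 * μ (⋃ i, {ω | t < M i ω}) := by
        rw [← hcompl, prob_compl_eq_one_sub (MeasurableSet.iUnion hA),
          ENNReal.sub_sub_cancel ENNReal.one_ne_top prob_le_one]
    _ ≤ 2 * μ {ω | t < N ω} := by
        gcongr
        exact iUnion_subset fun i ω h => h.trans_le (hMN i ω)

lemma iIndepFun.sum_measure_lt_le_one {M : ι → Ω → ℝ} (hM : iIndepFun M μ)
    (hMm : ∀ i, Measurable (M i)) {N : Ω → ℝ} (hMN : ∀ i ω, M i ω ≤ N ω) (hN0 : ∀ ω, 0 ≤ N ω)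
    (hNi : Integrable N μ) {τ : ℝ} (hτ0 : 0 < τ) (hτ : 4 * ∫ ω, N ω ∂μ ≤ τ) :
    ∑ i, μ {ω | τ < M i ω} ≤ 1 := by
  have hlt : min 1 (∑ i, μ {ω | τ < M i ω}) < 1 := calc
    min 1 (∑ i, μ {ω | τ < M i ω}) ≤ 2 * μ {ω | ENNReal.ofReal τ ≤ ENNReal.ofReal (N ω)} :=
      (hM.min_one_sum_measure_lt_le hMm hMN τ).trans <|
        mul_le_mul_right (measure_mono fun ω hω => ENNReal.ofReal_le_ofReal (le_of_lt hω)) 2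
    _ ≤ 2 * ((∫⁻ ω, ENNReal.ofReal (N ω) ∂μ) / ENNReal.ofReal τ) := by
      gcongr
      exact meas_ge_le_lintegral_div hNi.aemeasurable.ennreal_ofReal
        (ENNReal.ofReal_pos.2 hτ0).ne' ENNReal.ofReal_ne_top
    _ < 1 := by
      rw [← mul_div_assoc, ← ofReal_integral_eq_lintegral_ofReal hNi (ae_of_all _ hN0),
        ← ENNReal.ofReal_ofNat 2, ← ENNReal.ofReal_mul zero_le_two]
      refine ENNReal.div_lt_of_lt_mul ?_
      have : 0 ≤ ∫ ω, N ω ∂μ := integral_nonneg hN0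
      rw [one_mul, ENNReal.ofReal_lt_ofReal_iff hτ0]
      linarith
  exact (min_lt_iff.1 hlt).resolve_left (lt_irrefl 1) |>.le

lemma iIndepFun.integral_sum_indicator_lt_le {M : ι → Ω → ℝ} (hM : iIndepFun M μ)
    (hMm : ∀ i, Measurable (M i)) {N : Ω → ℝ} (hMN : ∀ i ω, M i ω ≤ N ω) (hN0 : ∀ ω, 0 ≤ N ω)
    (hNi : Integrable N μ) {τ : ℝ} (hτ0 : 0 < τ) (hτ : 4 * ∫ ω, N ω ∂μ ≤ τ) :
    ∫ ω, ∑ i, {ω | τ < M i ω}.indicator (M i) ω ∂μ ≤ τ + 2 * ∫ ω, N ω ∂μ := by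
  have hEN0 : 0 ≤ ∫ ω, N ω ∂μ := integral_nonneg hN0
  set G : ℝ → ENNReal := fun t => ∑ i, μ {ω | t < M i ω}
  have hG : Antitone G := fun s t hst =>
    sum_le_sum fun i _ => measure_mono fun ω h => hst.trans_lt h
  have hint : ∫⁻ t in Ioi 0, min 1 (G t) ≤ ENNReal.ofReal (2 * ∫ ω, N ω ∂μ) := by
    rw [ENNReal.ofReal_mul zero_le_two, ENNReal.ofReal_ofNat,
      ofReal_integral_eq_lintegral_ofReal hNi (ae_of_all _ hN0),
      lintegral_eq_lintegral_meas_lt μ (ae_of_all _ hN0) hNi.aemeasurable,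
      ← lintegral_const_mul' _ _ ENNReal.ofNat_ne_top]
    exact lintegral_mono (hM.min_one_sum_measure_lt_le hMm hMN)
  rw [integral_eq_lintegral_of_nonneg_ae (ae_of_all _ fun ω => sum_nonneg fun i _ =>
      indicator_nonneg (fun ω (h : ω ∈ {ω | τ < M i ω}) => hτ0.le.trans (le_of_lt h)) ω)
    (Finset.measurable_fun_sum _ fun i _ =>
      (hMm i).indicator (hMm i measurableSet_Ioi)).aestronglyMeasurable]
  refine ENNReal.toReal_le_of_le_ofReal (by linarith) ?_
  calc ∫⁻ ω, ENNReal.ofReal (∑ i, {ω | τ < M i ω}.indicator (M i) ω) ∂μ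
      = ∫⁻ t in Ioi 0, G (max τ t) := lintegral_sum_indicator_lt_eq hMm hτ0.le
    _ ≤ ENNReal.ofReal τ + ∫⁻ t in Ioi 0, min 1 (G t) :=
      hG.setLIntegral_comp_max_le hτ0.le (hM.sum_measure_lt_le_one hMm hMN hN0 hNi hτ0 hτ)
    _ ≤ ENNReal.ofReal (τ + 2 * ∫ ω, N ω ∂μ) := by
      rw [ENNReal.ofReal_add hτ0.le (by linarith)]
      gcongr

lemma iIndepFun.integral_exp_sum_le {U : ι → Ω → ℝ} (hU : iIndepFun U μ)
    (hUm : ∀ i, Measurable (U i)) (h0 : ∀ i ω, 0 ≤ U i ω) (h1 : ∀ i ω, U i ω ≤ 1) :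
    ∫ ω, exp (∑ i, U i ω) ∂μ ≤ exp ((exp 1 - 1) * ∑ i, ∫ ω, U i ω ∂μ) := by
  have hUi : ∀ i, Integrable (U i) μ := fun i =>
    Integrable.of_bound (hUm i).aestronglyMeasurable 1
      (ae_of_all _ fun ω => by rw [norm_of_nonneg (h0 i ω)]; exact h1 i ω)
  have hexp : ∀ i, ∫ ω, exp (U i ω) ∂μ ≤ exp ((exp 1 - 1) * ∫ ω, U i ω ∂μ) := fun i => calc
    ∫ ω, exp (U i ω) ∂μ ≤ ∫ ω, 1 + (exp 1 - 1) * U i ω ∂μ := by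
      refine integral_mono (Integrable.of_bound (hUm i).exp.aestronglyMeasurable (exp 1)
        (ae_of_all _ fun ω => ?_)) ((integrable_const 1).add ((hUi i).const_mul _))
        fun ω => exp_le_one_add_exp_one_sub_one_mul (h0 i ω) (h1 i ω)
      rw [norm_of_nonneg (exp_pos _).le]; exact exp_le_exp.2 (h1 i ω)
    _ = 1 + (exp 1 - 1) * ∫ ω, U i ω ∂μ := by
      rw [integral_add (integrable_const 1) ((hUi i).const_mul _), integral_const_mul]
      simp
    _ ≤ exp ((exp 1 - 1) * ∫ ω, U i ω ∂μ) := by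
      linarith [add_one_le_exp ((exp 1 - 1) * ∫ ω, U i ω ∂μ)]
  calc ∫ ω, exp (∑ i, U i ω) ∂μ = ∫ ω, ∏ i, exp (U i ω) ∂μ := by simp_rw [exp_sum]
    _ = ∏ i, ∫ ω, exp (U i ω) ∂μ := hU.integral_fun_prod_comp (fun i => (hUm i).aemeasurable)
        fun i => continuous_exp.aestronglyMeasurable
    _ ≤ ∏ i, exp ((exp 1 - 1) * ∫ ω, U i ω ∂μ) :=
        prod_le_prod (fun i _ => integral_nonneg fun ω => (exp_pos _).le) fun i _ => hexp i
    _ = exp ((exp 1 - 1) * ∑ i, ∫ ω, U i ω ∂μ) := by rw [mul_sum, exp_sum]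

variable {κ : Type*} [Fintype κ]

theorem integral_sum_exp_sum_div_le {Y : ι → Ω → κ → ℝ}
    (hY : ∀ j, iIndepFun (fun i ω => Y i ω j) μ) (hYm : ∀ i j, Measurable fun ω => Y i ω j)
    {τ : ℝ} (hτ : 0 < τ) (h0 : ∀ i ω j, 0 ≤ Y i ω j) (hYτ : ∀ i ω j, Y i ω j ≤ τ) {σ : ℝ}
    (hσ : ∀ j, ∑ i, ∫ ω, Y i ω j ∂μ ≤ σ) :
    ∫ ω, ∑ j, exp ((∑ i, Y i ω j) / τ) ∂μ ≤ Fintype.card κ * exp ((exp 1 - 1) * σ / τ) := by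
  have hc : 0 ≤ exp 1 - 1 := by linarith [add_one_le_exp 1]
  have hj : ∀ j, ∫ ω, exp ((∑ i, Y i ω j) / τ) ∂μ ≤ exp ((exp 1 - 1) * σ / τ) := fun j => calc
    ∫ ω, exp ((∑ i, Y i ω j) / τ) ∂μ = ∫ ω, exp (∑ i, Y i ω j / τ) ∂μ := by simp_rw [sum_div]
    _ ≤ exp ((exp 1 - 1) * ∑ i, ∫ ω, Y i ω j / τ ∂μ) :=
      ((hY j).comp (fun _ x => x / τ) fun _ => measurable_id.div_const τ).integral_exp_sum_le
        (fun i => (hYm i j).div_const τ) (fun i ω => div_nonneg (h0 i ω j) hτ.le)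
        fun i ω => (div_le_one hτ).2 (hYτ i ω j)
    _ ≤ exp ((exp 1 - 1) * σ / τ) := by
      simp_rw [integral_div, ← sum_div, mul_div_assoc]
      gcongr
      exact hσ j
  calc ∫ ω, ∑ j, exp ((∑ i, Y i ω j) / τ) ∂μ = ∑ j, ∫ ω, exp ((∑ i, Y i ω j) / τ) ∂μ :=
        integral_finsetSum _ fun j _ => Integrable.of_bound
          (by fun_prop : Measurable fun ω => exp ((∑ i, Y i ω j) / τ)).aestronglyMeasurable _
          (ae_of_all _ fun ω => by
            rw [norm_of_nonneg (exp_pos _).le]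
            exact exp_le_exp.2 (Real.sum_div_le_card hτ fun i => hYτ i ω j))
    _ ≤ ∑ _j : κ, exp ((exp 1 - 1) * σ / τ) := sum_le_sum fun j _ => hj j
    _ = Fintype.card κ * exp ((exp 1 - 1) * σ / τ) := by simp

variable [Nonempty κ]

theorem integral_iSup_sum_le_of_nonneg_of_le {Y : ι → Ω → κ → ℝ}
    (hY : ∀ j, iIndepFun (fun i ω => Y i ω j) μ) (hYm : ∀ i j, Measurable fun ω => Y i ω j)
    {τ : ℝ} (hτ : 0 < τ) (h0 : ∀ i ω j, 0 ≤ Y i ω j) (hYτ : ∀ i ω j, Y i ω j ≤ τ) {σ : ℝ}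
    (hσ : ∀ j, ∑ i, ∫ ω, Y i ω j ∂μ ≤ σ) :
    ∫ ω, ⨆ j, ∑ i, Y i ω j ∂μ ≤ τ * log (Fintype.card κ) + (exp 1 - 1) * σ := by
  set W : Ω → ℝ := fun ω => ∑ j, exp ((∑ i, Y i ω j) / τ)
  have hWm : Measurable W := by fun_prop
  have hW1 : ∀ ω, 1 ≤ W ω := fun ω =>
    (one_le_exp (div_nonneg (sum_nonneg fun i _ => h0 i ω _) hτ.le)).trans
      (single_le_sum (f := fun j => exp ((∑ i, Y i ω j) / τ)) (fun j _ => (exp_pos _).le)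
        (mem_univ (Classical.arbitrary κ)))
  have hWle : ∀ ω, W ω ≤ Fintype.card κ * exp (Fintype.card ι) := fun ω => calc
    W ω ≤ ∑ _j : κ, exp (Fintype.card ι : ℝ) := sum_le_sum fun j _ =>
        exp_le_exp.2 (Real.sum_div_le_card hτ fun i => hYτ i ω j)
    _ = Fintype.card κ * exp (Fintype.card ι) := by simp
  have hWi : Integrable W μ := Integrable.of_bound hWm.aestronglyMeasurable _
    (ae_of_all _ fun ω => by rw [norm_of_nonneg (zero_le_one.trans (hW1 ω))]; exact hWle ω)
  have hlogWi : Integrable (fun ω => log (W ω)) μ := Integrable.of_bound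
    hWm.log.aestronglyMeasurable _ (ae_of_all _ fun ω => by
      rw [norm_of_nonneg (log_nonneg (hW1 ω))]
      exact log_le_log (zero_lt_one.trans_le (hW1 ω)) (hWle ω))
  have hEW := integral_sum_exp_sum_div_le hY hYm hτ h0 hYτ hσ
  have hW0 : 0 < ∫ ω, W ω ∂μ :=
    zero_lt_one.trans_le (by simpa using integral_mono (integrable_const (1 : ℝ)) hWi hW1)
  calc ∫ ω, ⨆ j, ∑ i, Y i ω j ∂μ ≤ ∫ ω, τ * log (W ω) ∂μ :=
        integral_mono_of_nonneg (ae_of_all _ fun ω => iSup_nonneg fun j => sum_nonneg fun i _ =>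
          h0 i ω j) (hlogWi.const_mul τ) (ae_of_all _ fun ω => iSup_le_mul_log_sum_exp _ hτ)
    _ ≤ τ * log (∫ ω, W ω ∂μ) := by
        rw [integral_const_mul]
        exact mul_le_mul_of_nonneg_left (integral_log_le_log_integral zero_lt_one
          (ae_of_all _ hW1) hWi hlogWi) hτ.le
    _ ≤ τ * log (Fintype.card κ * exp ((exp 1 - 1) * σ / τ)) := by gcongr
    _ = τ * log (Fintype.card κ) + (exp 1 - 1) * σ := by
        rw [log_mul (by positivity) (exp_pos _).ne', log_exp]
        field_simp

theorem integral_iSup_sum_min_le {X : ι → Ω → κ → ℝ} (hXm : ∀ i, Measurable (X i))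
    (hX : iIndepFun X μ) (hX0 : ∀ i ω j, 0 ≤ X i ω j)
    (hXi : ∀ i j, Integrable (fun ω => X i ω j) μ) {τ : ℝ} (hτ : 0 < τ) :
    ∫ ω, ⨆ j, ∑ i, min (X i ω j) τ ∂μ
      ≤ τ * log (Fintype.card κ) + (exp 1 - 1) * ⨆ j, ∫ ω, ∑ i, X i ω j ∂μ := by
  refine integral_iSup_sum_le_of_nonneg_of_le
    (fun j => hX.comp (fun _ v => min (v j) τ) fun _ => by fun_prop) (fun i j => by fun_prop)
    hτ (fun i ω j => le_min (hX0 i ω j) hτ.le) (fun i ω j => min_le_right _ _) fun j => ?_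
  calc ∑ i, ∫ ω, min (X i ω j) τ ∂μ ≤ ∑ i, ∫ ω, X i ω j ∂μ := sum_le_sum fun i _ =>
        integral_mono_of_nonneg (ae_of_all _ fun ω => le_min (hX0 i ω j) hτ.le) (hXi i j)
          (ae_of_all _ fun ω => min_le_left _ _)
    _ = ∫ ω, ∑ i, X i ω j ∂μ := (integral_finsetSum _ fun i _ => hXi i j).symm
    _ ≤ ⨆ j, ∫ ω, ∑ i, X i ω j ∂μ :=
        le_ciSup (f := fun j => ∫ ω, ∑ i, X i ω j ∂μ) (finite_range _).bddAbove j

theorem integral_iSup_sum_le_of_four_mul_integral_le {X : ι → Ω → κ → ℝ}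
    (hXm : ∀ i, Measurable (X i)) (hX : iIndepFun X μ) (hX0 : ∀ i ω j, 0 ≤ X i ω j)
    (hXi : ∀ i j, Integrable (fun ω => X i ω j) μ)
    (hMi : Integrable (fun ω => ⨆ i, ⨆ j, X i ω j) μ) {τ : ℝ} (hτ0 : 0 < τ)
    (hτ : 4 * ∫ ω, ⨆ i, ⨆ j, X i ω j ∂μ ≤ τ) :
    ∫ ω, ⨆ j, ∑ i, X i ω j ∂μ ≤ τ * (log (Fintype.card κ) + 1)
      + (exp 1 - 1) * (⨆ j, ∫ ω, ∑ i, X i ω j ∂μ) + 2 * ∫ ω, ⨆ i, ⨆ j, X i ω j ∂μ := by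
  set M : ι → Ω → ℝ := fun i ω => ⨆ j, X i ω j
  have hXM : ∀ i ω j, X i ω j ≤ M i ω := fun i ω j => le_ciSup (finite_range _).bddAbove j
  have hMM : ∀ i ω, M i ω ≤ ⨆ i, M i ω := fun i ω =>
    le_ciSup (f := fun i => M i ω) (finite_range _).bddAbove i
  have hMm : ∀ i, Measurable (M i) := fun i => by fun_prop
  set S : Ω → ℝ := fun ω => ⨆ j, ∑ i, min (X i ω j) τ
  set T : Ω → ℝ := fun ω => ∑ i, {ω | τ < M i ω}.indicator (M i) ω
  have hsplit : ∀ ω, ⨆ j, ∑ i, X i ω j ≤ S ω + T ω := fun ω => ciSup_le fun j => calc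
    ∑ i, X i ω j ≤ ∑ i, (min (X i ω j) τ + {ω | τ < M i ω}.indicator (M i) ω) :=
      sum_le_sum fun i _ => by
        simpa [indicator_apply] using Real.le_min_add_ite (hX0 i ω j) (hXM i ω j) hτ0.le
    _ ≤ S ω + T ω := by
      rw [sum_add_distrib]
      gcongr
      exact le_ciSup (f := fun j => ∑ i, min (X i ω j) τ) (finite_range _).bddAbove j
  have hSi : Integrable S μ := Integrable.of_bound (by fun_prop : Measurable S).aestronglyMeasurable
    (Fintype.card ι * τ) (ae_of_all _ fun ω => by
      rw [norm_of_nonneg (iSup_nonneg fun j => sum_nonneg fun i _ => le_min (hX0 i ω j) hτ0.le)]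
      exact ciSup_le fun j => (sum_le_sum fun i _ => min_le_right _ τ).trans_eq (by simp))
  have hTi : Integrable T μ := integrable_finsetSum _ fun i _ =>
    (hMi.mono' (hMm i).aestronglyMeasurable (ae_of_all _ fun ω => by
      rw [norm_of_nonneg (iSup_nonneg fun j => hX0 i ω j)]; exact hMM i ω)).indicator
      (hMm i measurableSet_Ioi)
  have hS := integral_iSup_sum_min_le hXm hX hX0 hXi hτ0
  have hT : ∫ ω, T ω ∂μ ≤ τ + 2 * ∫ ω, ⨆ i, M i ω ∂μ :=
    (hX.comp (fun _ v => ⨆ j, v j) fun _ => by fun_prop).integral_sum_indicator_lt_le hMm hMM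
      (fun ω => iSup_nonneg fun i => iSup_nonneg fun j => hX0 i ω j) hMi hτ0 hτ
  calc ∫ ω, ⨆ j, ∑ i, X i ω j ∂μ ≤ ∫ ω, S ω + T ω ∂μ :=
        integral_mono_of_nonneg (ae_of_all _ fun ω => iSup_nonneg fun j => sum_nonneg fun i _ =>
          hX0 i ω j) (hSi.add hTi) (ae_of_all _ hsplit)
    _ = ∫ ω, S ω ∂μ + ∫ ω, T ω ∂μ := integral_add hSi hTi
    _ ≤ _ := by linarith

theorem integral_iSup_sum_le {X : ι → Ω → κ → ℝ} (hXm : ∀ i, Measurable (X i))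
    (hX : iIndepFun X μ) (hX0 : ∀ i ω j, 0 ≤ X i ω j)
    (hXi : ∀ i j, Integrable (fun ω => X i ω j) μ)
    (hMi : Integrable (fun ω => ⨆ i, ⨆ j, X i ω j) μ) :
    ∫ ω, ⨆ j, ∑ i, X i ω j ∂μ ≤ 4 * (∫ ω, ⨆ i, ⨆ j, X i ω j ∂μ) * log (Fintype.card κ)
      + 6 * ∫ ω, ⨆ i, ⨆ j, X i ω j ∂μ + (exp 1 - 1) * ⨆ j, ∫ ω, ∑ i, X i ω j ∂μ := by
  set EM := ∫ ω, ⨆ i, ⨆ j, X i ω j ∂μ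
  have hEM0 : 0 ≤ EM :=
    integral_nonneg fun ω => iSup_nonneg fun i => iSup_nonneg fun j => hX0 i ω j
  set L := log (Fintype.card κ) + 1
  have hL : 0 < L := by
    have : (1 : ℝ) ≤ Fintype.card κ := by exact_mod_cast Fintype.card_pos
    linarith [log_nonneg this]
  -- `τ = 4 EM` itself may be `0`, so take `τ = 4 EM + ε / L` and let `ε → 0`.
  refine le_of_forall_pos_le_add fun ε hε => ?_
  have hεL := div_pos hε hL
  have hτ := integral_iSup_sum_le_of_four_mul_integral_le hXm hX hX0 hXi hMi
    (τ := 4 * EM + ε / L) (by linarith) (le_add_of_nonneg_right hεL.le)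
  have hτL : (4 * EM + ε / L) * L = 4 * EM * log (Fintype.card κ) + 4 * EM + ε := by
    field_simp; ring
  linarith

end ProbabilityTheory

theorem stmt10 : ∃ K : ℝ, 0 < K ∧
    ∀ (Ω : Type) [MeasurableSpace Ω] (μ : Measure Ω) [IsProbabilityMeasure μ]
      (n p : ℕ) (_ : 2 ≤ p) (X : Fin n → Ω → Fin p → ℝ)
      (_ : ∀ i, Measurable (X i))
      (_ : ProbabilityTheory.iIndepFun X μ)
      (_ : ∀ i ω j, 0 ≤ X i ω j)
      (_ : ∀ i j, Integrable (fun ω => X i ω j) μ)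
      (_ : Integrable (fun ω => ⨆ i, ⨆ j, X i ω j) μ)
      (_ : Integrable (fun ω => ⨆ j, ∑ i, X i ω j) μ),
      (∫ ω, (⨆ j, ∑ i, X i ω j) ∂μ) ≤
        K * ((⨆ j : Fin p, ∫ ω, (∑ i, X i ω j) ∂μ) +
          (∫ ω, (⨆ i, ⨆ j, X i ω j) ∂μ) * Real.log p) := by
  refine ⟨13, by norm_num, fun Ω _ μ _ n p hp X hXm hX hX0 hXi hMi _ => ?_⟩
  have : Nonempty (Fin p) := ⟨⟨0, by omega⟩⟩
  have hbound := integral_iSup_sum_le hXm hX hX0 hXi hMi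
  rw [Fintype.card_fin] at hbound
  have hEM0 : 0 ≤ ∫ ω, ⨆ i, ⨆ j, X i ω j ∂μ :=
    integral_nonneg fun ω => iSup_nonneg fun i => iSup_nonneg fun j => hX0 i ω j
  have hσ0 : 0 ≤ ⨆ j, ∫ ω, ∑ i, X i ω j ∂μ :=
    iSup_nonneg fun j => integral_nonneg fun ω => sum_nonneg fun i _ => hX0 i ω j
  have hlog : 2 / 3 < log p :=
    (show (2 : ℝ) / 3 < log 2 by linarith [log_two_gt_d9]).trans_le
      (log_le_log two_pos (by exact_mod_cast hp))
  have he : exp 1 - 1 ≤ 2 := by linarith [exp_one_lt_d9]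
  nlinarith [mul_le_mul_of_nonneg_right he hσ0, mul_le_mul_of_nonneg_left hlog.le hEM0]
end

section
/- Let g ∈ C³(ℝ) with ‖g′‖_∞, ‖g″‖_∞, ‖g‴‖_∞ < ∞, and let F_β(x) = β⁻¹ log(∑_{j=1}^p e^{β x_j}) be the smooth-max on ℝ^p with β > 0. Then the composite m = g ∘ F_β satisfies ∑_{j,k=1}^p |∂_j ∂_k m(x)| ≤ ‖g″‖_∞ + 2‖g′‖_∞ β for all x ∈ ℝ^p. -/
/-!
The gradient of the smooth max `F_β` is the softmax vector `s`, a probability vector, and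
since `s_k = exp (β (x_k - F_β x))` its Hessian is `β (diag s - s sᵀ)`. By the chain rule the
Hessian of `g ∘ F_β` is `g''(F_β) s sᵀ + g'(F_β) β (diag s - s sᵀ)`; the first matrix has
entry sum `1`, and row `j` of `diag s - s sᵀ` has absolute sum `2 s_j (1 - s_j) ≤ 2 s_j`.
-/

/-- Partial derivative in the `j`-th coordinate direction. -/
noncomputable def pd {p : ℕ} (j : Fin p) (f : (Fin p → ℝ) → ℝ) (x : Fin p → ℝ) : ℝ :=
  fderiv ℝ f x (Pi.single j 1)

open Real Finset

section ProbabilityVector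

variable {ι : Type*} [Fintype ι] [DecidableEq ι] {s : ι → ℝ}

theorem sum_abs_mul_ite_sub (hs_nonneg : ∀ i, 0 ≤ s i) (hs_sum : ∑ i, s i = 1) (j : ι) :
    ∑ k, |s k * ((if k = j then 1 else 0) - s j)| = 2 * s j * (1 - s j) := by
  have hsj : s j ≤ 1 := hs_sum ▸ single_le_sum (fun i _ => hs_nonneg i) (mem_univ j)
  have habs : ∀ k, |s k * ((if k = j then 1 else 0) - s j)| =
      s j * s k + if k = j then s j * (1 - 2 * s j) else 0 := by
    intro k
    rcases eq_or_ne k j with rfl | hk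
    · rw [if_pos rfl, if_pos rfl,
        abs_of_nonneg (mul_nonneg (hs_nonneg k) (by linarith))]
      ring
    · simp only [hk, ↓reduceIte, zero_sub, mul_neg, abs_neg, abs_mul,
        abs_of_nonneg (hs_nonneg _), add_zero]
      ring
  simp only [habs, sum_add_distrib, ← mul_sum, hs_sum, sum_ite_eq', mem_univ, if_true]
  ring

theorem sum_sum_abs_mul_ite_sub_le_two (hs_nonneg : ∀ i, 0 ≤ s i)
    (hs_sum : ∑ i, s i = 1) : ∑ j, ∑ k, |s k * ((if k = j then 1 else 0) - s j)| ≤ 2 :=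
  calc ∑ j, ∑ k, |s k * ((if k = j then 1 else 0) - s j)|
      = ∑ j, 2 * s j * (1 - s j) :=
        sum_congr rfl fun j _ => sum_abs_mul_ite_sub hs_nonneg hs_sum j
    _ ≤ ∑ j, 2 * s j := sum_le_sum fun j _ => by nlinarith [hs_nonneg j]
    _ = 2 := by rw [← mul_sum, hs_sum, mul_one]

end ProbabilityVector

namespace SmoothMax

variable {ι : Type*} [Fintype ι]

noncomputable def expSum (β : ℝ) (x : ι → ℝ) : ℝ := ∑ i, exp (β * x i)

noncomputable def smoothMax (β : ℝ) (x : ι → ℝ) : ℝ := β⁻¹ * log (expSum β x)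

noncomputable def softmax (β : ℝ) (k : ι) (x : ι → ℝ) : ℝ := exp (β * x k) / expSum β x

noncomputable def gradSmoothMax (β : ℝ) (x : ι → ℝ) : (ι → ℝ) →L[ℝ] ℝ :=
  ∑ i, softmax β i x • ContinuousLinearMap.proj i

theorem expSum_pos [Nonempty ι] (β : ℝ) (x : ι → ℝ) : 0 < expSum β x :=
  sum_pos (fun _ _ => exp_pos _) univ_nonempty

theorem gradSmoothMax_apply_single [DecidableEq ι] (β : ℝ) (x : ι → ℝ) (j : ι) :
    gradSmoothMax β x (Pi.single j 1) = softmax β j x := by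
  simp [gradSmoothMax, Pi.single_apply]

theorem hasFDerivAt_expSum (β : ℝ) (x : ι → ℝ) :
    HasFDerivAt (expSum β)
      (∑ i, (β * exp (β * x i)) • (ContinuousLinearMap.proj i : (ι → ℝ) →L[ℝ] ℝ)) x := by
  refine HasFDerivAt.fun_sum fun i _ => ?_
  have := (hasDerivAt_exp (β * x i)).comp_hasFDerivAt x
    ((hasFDerivAt_apply (𝕜 := ℝ) i x).const_mul β)
  rwa [smul_smul, mul_comm] at this

variable [Nonempty ι] {β : ℝ} {x : ι → ℝ}

theorem softmax_nonneg (k : ι) : 0 ≤ softmax β k x :=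
  div_nonneg (exp_pos _).le (expSum_pos β x).le

theorem sum_softmax : ∑ k, softmax β k x = 1 := by
  simp only [softmax, ← sum_div]
  exact div_self (expSum_pos β x).ne'

theorem softmax_eq_exp (hβ : β ≠ 0) (k : ι) :
    softmax β k x = exp (β * (x k - smoothMax β x)) := by
  rw [softmax, smoothMax, mul_sub, ← mul_assoc, mul_inv_cancel₀ hβ, one_mul, exp_sub,
    exp_log (expSum_pos β x)]

theorem hasFDerivAt_smoothMax (hβ : β ≠ 0) :
    HasFDerivAt (smoothMax β) (gradSmoothMax β x) x := by
  have := ((hasDerivAt_log (expSum_pos β x).ne').comp_hasFDerivAt x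
    (hasFDerivAt_expSum β x)).const_mul β⁻¹
  refine this.congr_fderiv ?_
  simp only [gradSmoothMax, smul_smul, Finset.smul_sum, softmax]
  refine sum_congr rfl fun i _ => ?_
  congr 1
  field_simp

theorem hasFDerivAt_comp_smoothMax (hβ : β ≠ 0) {f : ℝ → ℝ} {f' : ℝ}
    (hf : HasDerivAt f f' (smoothMax β x)) :
    HasFDerivAt (fun y => f (smoothMax β y)) (f' • gradSmoothMax β x) x :=
  hf.comp_hasFDerivAt x (hasFDerivAt_smoothMax hβ)

theorem hasFDerivAt_softmax (hβ : β ≠ 0) (k : ι) :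
    HasFDerivAt (softmax β k)
      ((β * softmax β k x) • (ContinuousLinearMap.proj k - gradSmoothMax β x)) x := by
  have h := (hasDerivAt_exp (β * (x k - smoothMax β x))).comp_hasFDerivAt x
    (((hasFDerivAt_apply (𝕜 := ℝ) k x).sub (hasFDerivAt_smoothMax hβ)).const_mul β)
  rw [← softmax_eq_exp hβ, smul_smul, mul_comm] at h
  exact h.congr_of_eventuallyEq (.of_forall fun y => softmax_eq_exp hβ k)

end SmoothMax

section Partials

open SmoothMax

variable {p : ℕ} [Nonempty (Fin p)] {β : ℝ} {g : ℝ → ℝ}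

theorem pd_comp_smoothMax (hβ : β ≠ 0) (hg : Differentiable ℝ g) (k : Fin p)
    (x : Fin p → ℝ) :
    pd k (fun y => g (smoothMax β y)) x = deriv g (smoothMax β x) * softmax β k x := by
  rw [pd, (hasFDerivAt_comp_smoothMax hβ (hg _).hasDerivAt).fderiv]
  simp [gradSmoothMax_apply_single]

theorem pd_pd_comp_smoothMax (hβ : β ≠ 0) (hg : ContDiff ℝ 2 g) (j k : Fin p)
    (x : Fin p → ℝ) :
    pd j (pd k (fun y => g (smoothMax β y))) x =
      iteratedDeriv 2 g (smoothMax β x) * (softmax β j x * softmax β k x) +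
      deriv g (smoothMax β x) *
        (β * (softmax β k x * ((if k = j then 1 else 0) - softmax β j x))) := by
  have hg' : Differentiable ℝ (deriv g) := by
    simpa using hg.differentiable_iteratedDeriv 1 (by norm_num)
  rw [funext (pd_comp_smoothMax hβ (hg.differentiable (by norm_num)) k), pd,
    ((hasFDerivAt_comp_smoothMax hβ (hg' _).hasDerivAt).fun_mul
      (hasFDerivAt_softmax hβ k)).fderiv]
  simp [gradSmoothMax_apply_single, iteratedDeriv_succ, Pi.single_apply]
  ring

end Partials

open SmoothMax in
theorem stmt11 (p : ℕ) (hp : 0 < p) (β : ℝ) (hβ : 0 < β) (g : ℝ → ℝ)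
    (hg : ContDiff ℝ 3 g) (C1 C2 : ℝ)
    (h1 : ∀ t, |deriv g t| ≤ C1) (h2 : ∀ t, |iteratedDeriv 2 g t| ≤ C2) :
    ∀ x : Fin p → ℝ,
      ∑ j, ∑ k,
        |pd j (pd k (fun y : Fin p → ℝ =>
          g (β⁻¹ * Real.log (∑ i, Real.exp (β * y i))))) x| ≤
      C2 + 2 * C1 * β := by
  intro x
  have : Nonempty (Fin p) := Fin.pos_iff_nonempty.mp hp
  have hC1 : 0 ≤ C1 := (abs_nonneg _).trans (h1 0)
  set s : Fin p → ℝ := fun i => softmax β i x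
  have hs_nonneg : ∀ i, 0 ≤ s i := fun i => softmax_nonneg i
  calc ∑ j, ∑ k, |pd j (pd k fun y => g (smoothMax β y)) x|
      ≤ ∑ j, ∑ k,
          (C2 * (s j * s k) + C1 * β * |s k * ((if k = j then 1 else 0) - s j)|) := by
        gcongr with j _ k _
        rw [pd_pd_comp_smoothMax hβ.ne' (hg.of_le (by norm_num))]
        refine (abs_add_le _ _).trans (add_le_add ?_ ?_)
        · rw [abs_mul, abs_of_nonneg (mul_nonneg (hs_nonneg j) (hs_nonneg k))]
          exact mul_le_mul_of_nonneg_right (h2 _) (mul_nonneg (hs_nonneg j) (hs_nonneg k))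
        · rw [abs_mul, abs_mul, abs_of_pos hβ, ← mul_assoc]
          gcongr
          exact h1 _
    _ = C2 * ((∑ j, s j) * ∑ k, s k) +
          C1 * β * ∑ j, ∑ k, |s k * ((if k = j then 1 else 0) - s j)| := by
        simp only [sum_add_distrib, ← mul_sum, ← sum_mul]
    _ ≤ C2 + 2 * C1 * β := by
        rw [sum_softmax, mul_one, mul_one]
        nlinarith [sum_sum_abs_mul_ite_sub_le_two hs_nonneg sum_softmax, mul_nonneg hC1 hβ.le]
end

section
/- Let F_β(x) = β⁻¹ log(∑_{j=1}^p e^{βx_j}) on ℝ^p with β > 0, p ≥ 2. Then for the third-order partial derivatives there exist nonnegative functions U_{jkl} : ℝ^p → ℝ such that |∂_j∂_k∂_l (g∘F_β)(x)| ≤ U_{jkl}(x) for all x, and ∑_{j,k,l=1}^p U_{jkl}(x) ≤ C(‖g‴‖_∞ + β‖g″‖_∞ + β²‖g′‖_∞) for all x ∈ ℝ^p, where C is an absolute constant and g ∈ C³(ℝ) with bounded derivatives up to order 3. -/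
/-! Writing `F = logSumExp β`, the chain rule gives
`∂ⱼ∂ₖ∂ₗ(g ∘ F) = g‴(F) Fⱼ Fₖ Fₗ + g″(F) (Fⱼ Fₖₗ + Fₖ Fⱼₗ + Fⱼₖ Fₗ) + g′(F) Fⱼₖₗ`,
so it suffices to bound the absolute sums of the partials of `F`. These are polynomials in the
softmax probabilities `π`: `Fⱼ = πⱼ` and `∂ₖ πₗ = β πₗ (δₖₗ - πₖ)`. Since `∑ⱼ |δⱼₖ - πⱼ| ≤ 2` for
every probability vector `π`, the first, second and third partials of `F` have absolute sums at
most `1`, `2β` and `6β²`, whence the bound with `C = 6`. -/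

section PartialDerivative

variable {p : ℕ} {f h : (Fin p → ℝ) → ℝ} {x : Fin p → ℝ} (j : Fin p)

theorem pd_add (hf : DifferentiableAt ℝ f x) (hh : DifferentiableAt ℝ h x) :
    pd j (fun y => f y + h y) x = pd j f x + pd j h x := by
  simp [pd, fderiv_fun_add hf hh]

theorem pd_sub (hf : DifferentiableAt ℝ f x) (hh : DifferentiableAt ℝ h x) :
    pd j (fun y => f y - h y) x = pd j f x - pd j h x := by
  simp [pd, fderiv_fun_sub hf hh]

theorem pd_const_sub (c : ℝ) : pd j (fun y => c - f y) x = -pd j f x := by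
  simp [pd, fderiv_const_sub]

theorem pd_sum {ι : Type*} (s : Finset ι) {f : ι → (Fin p → ℝ) → ℝ}
    (hf : ∀ i ∈ s, DifferentiableAt ℝ (f i) x) :
    pd j (fun y => ∑ i ∈ s, f i y) x = ∑ i ∈ s, pd j (f i) x := by
  simp [pd, fderiv_fun_sum hf]

theorem pd_mul (hf : DifferentiableAt ℝ f x) (hh : DifferentiableAt ℝ h x) :
    pd j (fun y => f y * h y) x = f x * pd j h x + h x * pd j f x := by
  simp [pd, fderiv_fun_mul hf hh]

theorem pd_const_mul (hf : DifferentiableAt ℝ f x) (c : ℝ) :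
    pd j (fun y => c * f y) x = c * pd j f x := by
  simp [pd, fderiv_const_mul hf]

theorem pd_comp {G : ℝ → ℝ} (hG : DifferentiableAt ℝ G (f x)) (hf : DifferentiableAt ℝ f x) :
    pd j (fun y => G (f y)) x = deriv G (f x) * pd j f x := by
  change fderiv ℝ (G ∘ f) x _ = _
  rw [(hG.hasDerivAt.comp_hasFDerivAt x hf.hasFDerivAt).fderiv]
  rfl

theorem pd_apply (l : Fin p) : pd j (fun y => y l) x = (Pi.single j 1 : Fin p → ℝ) l := by
  simp [pd, fderiv_apply]

theorem ContDiff.pd {m n : WithTop ℕ∞} (hf : ContDiff ℝ n f) (hmn : m + 1 ≤ n) :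
    ContDiff ℝ m (pd j f) :=
  (hf.fderiv_right hmn).clm_apply contDiff_const

end PartialDerivative

section ChainRule

variable {p : ℕ} {g : ℝ → ℝ} {F : (Fin p → ℝ) → ℝ}

theorem pd_iteratedDeriv_comp {n : WithTop ℕ∞} {m : ℕ} (hg : ContDiff ℝ n g) (hm : m < n)
    {x : Fin p → ℝ} (hF : DifferentiableAt ℝ F x) (j : Fin p) :
    pd j (fun y => iteratedDeriv m g (F y)) x = iteratedDeriv (m + 1) g (F x) * pd j F x := by
  rw [pd_comp j ((hg.differentiable_iteratedDeriv m hm) _) hF, iteratedDeriv_succ]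

theorem pd_pd_pd_comp (hg : ContDiff ℝ 3 g) (hF : ContDiff ℝ 3 F) (j k l : Fin p)
    (x : Fin p → ℝ) :
    pd j (pd k (pd l (fun y => g (F y)))) x =
      iteratedDeriv 3 g (F x) * (pd j F x * pd k F x * pd l F x)
      + iteratedDeriv 2 g (F x) * (pd j F x * pd k (pd l F) x
          + pd k F x * pd j (pd l F) x + pd j (pd k F) x * pd l F x)
      + deriv g (F x) * pd j (pd k (pd l F)) x := by
  have hd : ∀ {f : (Fin p → ℝ) → ℝ}, ContDiff ℝ 1 f → Differentiable ℝ f :=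
    fun hf => hf.differentiable one_ne_zero
  have dF : Differentiable ℝ F := hd (hF.of_le (by norm_num))
  have dFk : Differentiable ℝ (pd k F) := hd (hF.pd k (by norm_num))
  have dFl : Differentiable ℝ (pd l F) := hd (hF.pd l (by norm_num))
  have dFkl : Differentiable ℝ (pd k (pd l F)) :=
    hd ((hF.pd l (m := 2) (by norm_num)).pd k (by norm_num))
  have dg1 : Differentiable ℝ (iteratedDeriv 1 g) :=
    hg.differentiable_iteratedDeriv 1 (by norm_num)
  have dg2 : Differentiable ℝ (iteratedDeriv 2 g) :=
    hg.differentiable_iteratedDeriv 2 (by norm_num)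
  have first : pd l (fun y => g (F y)) = fun y => iteratedDeriv 1 g (F y) * pd l F y := by
    funext y
    simpa using pd_iteratedDeriv_comp hg (m := 0) (by norm_num) (dF y) l
  have second : pd k (fun y => iteratedDeriv 1 g (F y) * pd l F y) = fun y =>
      iteratedDeriv 2 g (F y) * (pd k F y * pd l F y)
        + iteratedDeriv 1 g (F y) * pd k (pd l F) y := by
    funext y
    rw [pd_mul k (by fun_prop) (dFl y), pd_iteratedDeriv_comp hg (by norm_num) (dF y)]
    ring
  rw [first, second, pd_add j (by fun_prop) (by fun_prop), pd_mul j (by fun_prop) (by fun_prop),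
    pd_mul j (by fun_prop) (by fun_prop), pd_mul j (by fun_prop) (by fun_prop),
    pd_iteratedDeriv_comp hg (by norm_num) (dF x), pd_iteratedDeriv_comp hg (by norm_num) (dF x),
    iteratedDeriv_one]
  norm_num only
  ring

end ChainRule

section Majorant

variable {p : ℕ}

noncomputable def chainRuleMajorant (F : (Fin p → ℝ) → ℝ) (C1 C2 C3 : ℝ) (j k l : Fin p)
    (x : Fin p → ℝ) : ℝ :=
  C3 * |pd j F x * pd k F x * pd l F x|
    + C2 * (|pd j F x * pd k (pd l F) x| + |pd k F x * pd j (pd l F) x|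
      + |pd j (pd k F) x * pd l F x|)
    + C1 * |pd j (pd k (pd l F)) x|

theorem chainRuleMajorant_nonneg {F : (Fin p → ℝ) → ℝ} {C1 C2 C3 : ℝ} (hC1 : 0 ≤ C1)
    (hC2 : 0 ≤ C2) (hC3 : 0 ≤ C3) (j k l : Fin p) (x : Fin p → ℝ) :
    0 ≤ chainRuleMajorant F C1 C2 C3 j k l x := by
  unfold chainRuleMajorant
  positivity

theorem abs_pd_pd_pd_comp_le {g : ℝ → ℝ} {F : (Fin p → ℝ) → ℝ} (hg : ContDiff ℝ 3 g)
    (hF : ContDiff ℝ 3 F) {C1 C2 C3 : ℝ} (h1 : ∀ t, |deriv g t| ≤ C1)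
    (h2 : ∀ t, |iteratedDeriv 2 g t| ≤ C2) (h3 : ∀ t, |iteratedDeriv 3 g t| ≤ C3)
    (j k l : Fin p) (x : Fin p → ℝ) :
    |pd j (pd k (pd l (fun y => g (F y)))) x| ≤ chainRuleMajorant F C1 C2 C3 j k l x := by
  rw [pd_pd_pd_comp hg hF]
  unfold chainRuleMajorant
  refine (abs_add_le _ _).trans (add_le_add ((abs_add_le _ _).trans (add_le_add ?_ ?_)) ?_)
  all_goals rw [abs_mul]; gcongr
  · exact h3 _
  · exact (abs_nonneg _).trans (h2 0)
  · exact h2 _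
  · exact abs_add_three _ _ _
  · exact h1 _

theorem sum_chainRuleMajorant_le {F : (Fin p → ℝ) → ℝ} {C1 C2 C3 A1 A2 A3 : ℝ} (hC1 : 0 ≤ C1)
    (hC2 : 0 ≤ C2) (hC3 : 0 ≤ C3) (x : Fin p → ℝ) (hA1 : ∑ j, |pd j F x| ≤ A1)
    (hA2 : ∑ j, ∑ k, |pd j (pd k F) x| ≤ A2)
    (hA3 : ∑ j, ∑ k, ∑ l, |pd j (pd k (pd l F)) x| ≤ A3) :
    ∑ j, ∑ k, ∑ l, chainRuleMajorant F C1 C2 C3 j k l x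
      ≤ C3 * A1 ^ 3 + C2 * (3 * A1 * A2) + C1 * A3 := by
  set a : Fin p → ℝ := fun j => |pd j F x|
  set b : Fin p → Fin p → ℝ := fun j k => |pd j (pd k F) x|
  have hsum : ∑ j, ∑ k, ∑ l, chainRuleMajorant F C1 C2 C3 j k l x
      = C3 * (∑ j, a j) ^ 3 + C2 * (3 * (∑ j, a j) * ∑ j, ∑ k, b j k)
        + C1 * ∑ j, ∑ k, ∑ l, |pd j (pd k (pd l F)) x| := by
    simp only [chainRuleMajorant, abs_mul, Finset.sum_add_distrib, ← Finset.mul_sum,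
      ← Finset.sum_mul, a, b]
    ring
  have ha : 0 ≤ ∑ j, a j := Finset.sum_nonneg fun _ _ => abs_nonneg _
  rw [hsum]
  gcongr
  linarith

end Majorant

theorem sum_sum_sum_comm_reverse {ι M : Type*} [Fintype ι] [AddCommMonoid M]
    (f : ι → ι → ι → M) : ∑ i, ∑ j, ∑ k, f i j k = ∑ k, ∑ j, ∑ i, f i j k :=
  calc ∑ i, ∑ j, ∑ k, f i j k
      = ∑ j, ∑ i, ∑ k, f i j k := Finset.sum_comm
    _ = ∑ j, ∑ k, ∑ i, f i j k := Finset.sum_congr rfl fun _ _ => Finset.sum_comm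
    _ = ∑ k, ∑ j, ∑ i, f i j k := Finset.sum_comm

theorem sum_abs_single_sub_le {ι : Type*} [Fintype ι] [DecidableEq ι] {π : ι → ℝ}
    (hπ0 : ∀ i, 0 ≤ π i) (hπ1 : ∑ i, π i = 1) (k : ι) :
    ∑ j, |(Pi.single j 1 : ι → ℝ) k - π j| ≤ 2 := by
  calc ∑ j, |(Pi.single j 1 : ι → ℝ) k - π j|
      ≤ ∑ j, ((Pi.single j 1 : ι → ℝ) k + π j) := by
        gcongr with j
        refine (abs_sub (G := ℝ) _ _).trans_eq ?_
        rw [abs_of_nonneg (hπ0 j), abs_of_nonneg]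
        simp only [Pi.single_apply]
        split_ifs <;> norm_num
    _ = 2 := by
        rw [Finset.sum_add_distrib, hπ1, Finset.sum_pi_single]
        norm_num

section LogSumExp

variable {p : ℕ}

noncomputable def logSumExp (β : ℝ) (x : Fin p → ℝ) : ℝ :=
  β⁻¹ * Real.log (∑ i, Real.exp (β * x i))

noncomputable def softmax (β : ℝ) (i : Fin p) (x : Fin p → ℝ) : ℝ :=
  Real.exp (β * x i) / ∑ k, Real.exp (β * x k)

variable [NeZero p] {β : ℝ}

theorem sum_exp_pos (β : ℝ) (x : Fin p → ℝ) : 0 < ∑ i, Real.exp (β * x i) :=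
  Finset.sum_pos (fun _ _ => Real.exp_pos _) Finset.univ_nonempty

theorem softmax_nonneg (β : ℝ) (i : Fin p) (x : Fin p → ℝ) : 0 ≤ softmax β i x :=
  div_nonneg (Real.exp_pos _).le (sum_exp_pos β x).le

theorem sum_softmax (β : ℝ) (x : Fin p → ℝ) : ∑ i, softmax β i x = 1 := by
  simp only [softmax, ← Finset.sum_div]
  exact div_self (sum_exp_pos β x).ne'

theorem softmax_eq_exp (hβ : β ≠ 0) (i : Fin p) (x : Fin p → ℝ) :
    softmax β i x = Real.exp (β * (x i - logSumExp β x)) := by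
  rw [softmax, logSumExp, mul_sub, ← mul_assoc, mul_inv_cancel₀ hβ, one_mul, Real.exp_sub,
    Real.exp_log (sum_exp_pos β x)]

theorem contDiff_logSumExp (β : ℝ) {n : WithTop ℕ∞} : ContDiff ℝ n (logSumExp (p := p) β) := by
  have := fun x => (sum_exp_pos (p := p) β x).ne'
  unfold logSumExp
  fun_prop (disch := assumption)

theorem pd_logSumExp (hβ : β ≠ 0) (i : Fin p) : pd i (logSumExp β) = softmax β i := by
  funext x
  have hS := sum_exp_pos β x
  have hexp : ∀ k, pd i (fun y : Fin p → ℝ => Real.exp (β * y k)) x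
      = Real.exp (β * x k) * (β * (Pi.single i 1 : Fin p → ℝ) k) := fun k => by
    rw [pd_comp i Real.differentiableAt_exp (by fun_prop), Real.deriv_exp,
      pd_const_mul i (by fun_prop), pd_apply]
  unfold logSumExp
  rw [pd_const_mul i (by fun_prop (disch := exact hS.ne')),
    pd_comp (f := fun y : Fin p → ℝ => ∑ k, Real.exp (β * y k)) i
      (Real.differentiableAt_log hS.ne') (by fun_prop), Real.deriv_log,
    pd_sum i _ (fun _ _ => by fun_prop)]
  simp only [hexp, Pi.single_apply, mul_ite, mul_one, mul_zero, Finset.sum_ite_eq',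
    Finset.mem_univ, if_true, softmax]
  field_simp

theorem pd_softmax (hβ : β ≠ 0) (k l : Fin p) (x : Fin p → ℝ) :
    pd k (softmax β l) x
      = β * (softmax β l x * ((Pi.single k 1 : Fin p → ℝ) l - softmax β k x)) := by
  have hlse : Differentiable ℝ (logSumExp (p := p) β) :=
    (contDiff_logSumExp β (n := 1)).differentiable one_ne_zero
  rw [funext (softmax_eq_exp hβ l), pd_comp k Real.differentiableAt_exp (by fun_prop),
    Real.deriv_exp, pd_const_mul k (by fun_prop), pd_sub k (by fun_prop) (hlse x), pd_apply,
    pd_logSumExp hβ]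
  dsimp only
  ring

theorem pd_pd_pd_logSumExp (hβ : β ≠ 0) (j k l : Fin p) (x : Fin p → ℝ) :
    pd j (pd k (pd l (logSumExp β))) x
      = β ^ 2 * softmax β l x
        * (((Pi.single j 1 : Fin p → ℝ) l - softmax β j x)
            * ((Pi.single k 1 : Fin p → ℝ) l - softmax β k x)
          - softmax β k x * ((Pi.single j 1 : Fin p → ℝ) k - softmax β j x)) := by
  have hπ : ∀ i, Differentiable ℝ (softmax (p := p) β i) := fun i => by
    rw [← pd_logSumExp hβ]
    exact ((contDiff_logSumExp β (n := 2)).pd i (m := 1) (by norm_num)).differentiable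
      one_ne_zero
  rw [pd_logSumExp hβ, funext (pd_softmax hβ k l), pd_const_mul j (by fun_prop),
    pd_mul j (hπ l x) (by fun_prop), pd_const_sub, pd_softmax hβ, pd_softmax hβ]
  ring

theorem sum_abs_pd_logSumExp (hβ : β ≠ 0) (x : Fin p → ℝ) :
    ∑ j, |pd j (logSumExp β) x| = 1 := by
  simp only [pd_logSumExp hβ, abs_of_nonneg (softmax_nonneg _ _ _), sum_softmax]

theorem sum_abs_pd_pd_logSumExp (hβ : β ≠ 0) (x : Fin p → ℝ) :
    ∑ j, ∑ k, |pd j (pd k (logSumExp β)) x| ≤ 2 * |β| := by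
  have hπ0 := fun i => softmax_nonneg β i x
  calc ∑ j, ∑ k, |pd j (pd k (logSumExp β)) x|
      = |β| * ∑ k, softmax β k x * ∑ j, |(Pi.single j 1 : Fin p → ℝ) k - softmax β j x| := by
        simp only [pd_logSumExp hβ, pd_softmax hβ, abs_mul, abs_of_nonneg (hπ0 _),
          Finset.mul_sum]
        exact Finset.sum_comm
    _ ≤ |β| * ∑ k, softmax β k x * 2 := by
        gcongr with k
        exacts [hπ0 k, sum_abs_single_sub_le hπ0 (sum_softmax β x) k]
    _ = 2 * |β| := by
        rw [← Finset.sum_mul, sum_softmax]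
        ring

theorem sum_abs_pd_pd_pd_logSumExp (hβ : β ≠ 0) (x : Fin p → ℝ) :
    ∑ j, ∑ k, ∑ l, |pd j (pd k (pd l (logSumExp β))) x| ≤ 6 * β ^ 2 := by
  set π := fun i => softmax β i x
  set a : Fin p → Fin p → ℝ := fun j k => |(Pi.single j 1 : Fin p → ℝ) k - π j|
  have hπ0 : ∀ i, 0 ≤ π i := fun i => softmax_nonneg β i x
  have hπ1 : ∑ i, π i = 1 := sum_softmax β x
  have ha : ∀ k, ∑ j, a j k ≤ 2 := sum_abs_single_sub_le hπ0 hπ1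
  calc ∑ j, ∑ k, ∑ l, |pd j (pd k (pd l (logSumExp β))) x|
      ≤ ∑ j, ∑ k, ∑ l, β ^ 2 * π l * (a j l * a k l + π k * a j k) := by
        gcongr with j _ k _ l
        rw [pd_pd_pd_logSumExp hβ, abs_mul, abs_mul, abs_of_nonneg (sq_nonneg β),
          abs_of_nonneg (hπ0 l)]
        refine mul_le_mul_of_nonneg_left ((abs_sub (G := ℝ) _ _).trans_eq ?_)
          (mul_nonneg (sq_nonneg β) (hπ0 l))
        rw [abs_mul, abs_mul, abs_of_nonneg (hπ0 k)]
    _ = β ^ 2 * (∑ l, π l * ((∑ j, a j l) * ∑ k, a k l)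
          + ∑ l, π l * ∑ k, π k * ∑ j, a j k) := by
        simp only [Finset.mul_sum, Finset.sum_mul, mul_add, Finset.sum_add_distrib]
        congr 1 <;> rw [sum_sum_sum_comm_reverse] <;> simp only [mul_assoc]
    _ ≤ β ^ 2 * (∑ l, π l * (2 * 2) + ∑ l, π l * ∑ k, π k * 2) := by
        gcongr with l _ k <;> first | exact ha _ | exact hπ0 _
    _ = 6 * β ^ 2 := by
        simp only [← Finset.sum_mul, hπ1]
        ring

end LogSumExp

theorem stmt13 : ∃ C : ℝ, 0 < C ∧
    ∀ (p : ℕ) (_ : 2 ≤ p) (β : ℝ) (_ : 0 < β) (g : ℝ → ℝ) (_ : ContDiff ℝ 3 g)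
      (C1 C2 C3 : ℝ) (_ : ∀ t, |deriv g t| ≤ C1) (_ : ∀ t, |iteratedDeriv 2 g t| ≤ C2)
      (_ : ∀ t, |iteratedDeriv 3 g t| ≤ C3),
      ∃ U : Fin p → Fin p → Fin p → (Fin p → ℝ) → ℝ,
        (∀ j k l x, 0 ≤ U j k l x) ∧
        (∀ j k l x,
          |pd j (pd k (pd l (fun y : Fin p → ℝ =>
            g (β⁻¹ * Real.log (∑ i, Real.exp (β * y i)))))) x| ≤ U j k l x) ∧
        (∀ x, ∑ j, ∑ k, ∑ l, U j k l x ≤ C * (C3 + β * C2 + β ^ 2 * C1)) := by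
  refine ⟨6, by norm_num, fun p hp β hβ g hg C1 C2 C3 hC1 hC2 hC3 => ?_⟩
  have : NeZero p := ⟨by omega⟩
  have hC1' : 0 ≤ C1 := (abs_nonneg _).trans (hC1 0)
  have hC2' : 0 ≤ C2 := (abs_nonneg _).trans (hC2 0)
  have hC3' : 0 ≤ C3 := (abs_nonneg _).trans (hC3 0)
  refine ⟨chainRuleMajorant (logSumExp β) C1 C2 C3, chainRuleMajorant_nonneg hC1' hC2' hC3',
    abs_pd_pd_pd_comp_le hg (contDiff_logSumExp β) hC1 hC2 hC3, fun x => ?_⟩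
  calc ∑ j, ∑ k, ∑ l, chainRuleMajorant (logSumExp β) C1 C2 C3 j k l x
      ≤ C3 * 1 ^ 3 + C2 * (3 * 1 * (2 * |β|)) + C1 * (6 * β ^ 2) :=
        sum_chainRuleMajorant_le hC1' hC2' hC3' x (sum_abs_pd_logSumExp hβ.ne' x).le
          (sum_abs_pd_pd_logSumExp hβ.ne' x) (sum_abs_pd_pd_pd_logSumExp hβ.ne' x)
    _ ≤ 6 * (C3 + β * C2 + β ^ 2 * C1) := by
        rw [abs_of_pos hβ]
        nlinarith
end
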